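/- Let d ≥ 1 and let j_1,…,j_p be p distinct indices in {1,…,d} with 0 ≤ p ≤ d. Let S be the LIME random subset of {1,…,d}. Then P(j_1 ∉ S, …, j_p ∉ S) = (d−p)/((p+1)d). Equivalently, (1/d) · Σ_{s=1}^d Π_{k=0}^{p−1} (d−s−k)/(d−k) = (d−p)/((p+1)d). -/

import Mathlib

noncomputable section

/-- Expectation of `g S` where `S` is the LIME random subset of `{1,…,d}`:
first draw `s` uniformly in `{1,…,d}`, then `S` uniformly among subsets of cardinality `s`. -/
def limeExp (d : ℕ) (g : Finset (Fin d) → ℝ) : ℝ :=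
  (1 / (d : ℝ)) * ∑ s ∈ Finset.Icc 1 d, ((d.choose s : ℝ))⁻¹ *
    ∑ S ∈ Finset.univ.filter (fun S : Finset (Fin d) => S.card = s), g S

/-!
Given `#S = s`, the set `S` avoids the `p` indices of `J` with probability
`C(d-p, s) / C(d, s) = C(d-s, p) / C(d, p)`, and the latter is also the `k`-product of the second
form. Averaging over `s`, the hockey-stick identity `∑ s, C(d-s, p) = C(d, p+1)` gives
`C(d, p+1) / (d C(d, p)) = (d-p) / ((p+1) d)`.
-/

open Finset

lemma choose_mul_choose_sub_eq_zero {d s p : ℕ} (h : d < s + p) :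
    d.choose s * (d - s).choose p = 0 := by
  rcases le_or_gt s d with hs | hs
  · rw [Nat.choose_eq_zero_of_lt (by omega : d - s < p), mul_zero]
  · rw [Nat.choose_eq_zero_of_lt hs, zero_mul]

lemma choose_mul_choose_sub_comm (d s p : ℕ) :
    d.choose s * (d - s).choose p = d.choose p * (d - p).choose s := by
  by_cases h : s + p ≤ d
  · have hs := Nat.choose_mul (n := d) (k := s + p) (s := s) (Nat.le_add_right s p)
    have hp := Nat.choose_mul (n := d) (k := s + p) (s := p) (Nat.le_add_left p s)
    rw [Nat.add_sub_cancel_left] at hs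
    rw [Nat.add_sub_cancel] at hp
    rw [← hs, Nat.choose_symm_add, hp]
  · rw [choose_mul_choose_sub_eq_zero (by omega), choose_mul_choose_sub_eq_zero (by omega)]

lemma sum_range_choose_eq_choose_succ (d p : ℕ) :
    ∑ t ∈ range d, t.choose p = d.choose (p + 1) := by
  induction d with
  | zero => simp
  | succ d ih => rw [sum_range_succ, ih, Nat.choose_succ_succ, add_comm]

lemma sum_Icc_choose_sub (d p : ℕ) : ∑ s ∈ Icc 1 d, (d - s).choose p = d.choose (p + 1) := by
  rw [← Ico_add_one_right_eq_Icc, sum_Ico_eq_sum_range, Nat.add_sub_cancel,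
    ← sum_range_choose_eq_choose_succ, ← sum_range_reflect]
  refine sum_congr rfl fun k hk => ?_
  have hk := mem_range.1 hk
  congr 1
  omega

-- The `DecidablePred` binder lets the lemma match the instance `decidableForallFin` at `α = Fin d`.
lemma card_filter_card_eq_and_avoid {α : Type*} [Fintype α] [DecidableEq α] (J : Finset α)
    [DecidablePred fun S : Finset α => ∀ j ∈ J, j ∉ S] (s : ℕ) :
    #{S : Finset α | #S = s ∧ ∀ j ∈ J, j ∉ S} = (Fintype.card α - #J).choose s := by
  have hset : ({S : Finset α | #S = s ∧ ∀ j ∈ J, j ∉ S} : Finset (Finset α))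
      = powersetCard s Jᶜ := by
    ext S
    simp only [mem_filter, mem_univ, true_and, mem_powersetCard, subset_iff, mem_compl]
    exact ⟨fun ⟨hcard, h⟩ => ⟨fun x hx hxJ => h x hxJ hx, hcard⟩,
      fun ⟨h, hcard⟩ => ⟨hcard, fun j hj hjS => h hjS hj⟩⟩
  rw [hset, card_powersetCard, card_compl]

lemma avoid_prob_given_card {d s : ℕ} (hs : s ≤ d) (J : Finset (Fin d)) :
    ((d.choose s : ℝ))⁻¹ * ∑ S ∈ univ.filter (fun S : Finset (Fin d) => S.card = s),
      (if ∀ j ∈ J, j ∉ S then (1 : ℝ) else 0) = ((d - s).choose #J : ℝ) / d.choose #J := by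
  have hJ : #J ≤ d := by simpa using card_le_univ J
  have hcross : (d.choose s : ℝ) * (d - s).choose #J = d.choose #J * (d - #J).choose s := by
    exact_mod_cast choose_mul_choose_sub_comm d s #J
  have hcount := card_filter_card_eq_and_avoid J s
  rw [Fintype.card_fin] at hcount
  rw [sum_boole, filter_filter, hcount, inv_mul_eq_div,
    div_eq_div_iff (Nat.cast_ne_zero.2 (Nat.choose_pos hs).ne')
      (Nat.cast_ne_zero.2 (Nat.choose_pos hJ).ne')]
  linear_combination hcross.symm

section Field

variable {K : Type*} [Field K] [CharZero K]

lemma prod_range_sub_div_sub_eq_choose_div {d s : ℕ} (hs : s ≤ d) (p : ℕ) :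
    ∏ k ∈ range p, (((d : K) - s - k) / ((d : K) - k)) = ((d - s).choose p : K) / d.choose p := by
  simp only [prod_div_distrib, ← Nat.cast_sub hs, Finset.prod_range_natCast_sub,
    ← Nat.descFactorial_eq_prod_range, Nat.descFactorial_eq_factorial_mul_choose, Nat.cast_mul]
  exact mul_div_mul_left _ _ (by exact_mod_cast p.factorial_ne_zero)

lemma choose_succ_div_choose {d p : ℕ} (hp : p ≤ d) :
    (d.choose (p + 1) : K) / d.choose p = ((d : K) - p) / (p + 1) := by
  have hsucc : (d.choose (p + 1) : K) * (p + 1) = d.choose p * ((d : K) - p) := by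
    rw [← Nat.cast_sub hp]; exact_mod_cast Nat.choose_succ_right_eq d p
  rw [div_eq_div_iff (Nat.cast_ne_zero.2 (Nat.choose_pos hp).ne') (Nat.cast_add_one_ne_zero p),
    hsucc, mul_comm]

lemma average_choose_sub_div_choose {d p : ℕ} (hp : p ≤ d) :
    (1 / (d : K)) * ∑ s ∈ Icc 1 d, ((d - s).choose p : K) / d.choose p
      = ((d : K) - p) / ((p + 1) * d) := by
  rw [← sum_div, ← Nat.cast_sum, sum_Icc_choose_sub, choose_succ_div_choose hp, one_div_mul_eq_div,
    div_div]

end Field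

theorem lime_avoid_prob_general (d : ℕ) (J : Finset (Fin d)) :
    limeExp d (fun S => if ∀ j ∈ J, j ∉ S then (1 : ℝ) else 0)
        = ((d : ℝ) - (J.card : ℝ)) / (((J.card : ℝ) + 1) * (d : ℝ))
      ∧ (1 / (d : ℝ)) * ∑ s ∈ Finset.Icc 1 d,
          ∏ k ∈ Finset.range J.card, (((d : ℝ) - (s : ℝ) - (k : ℝ)) / ((d : ℝ) - (k : ℝ)))
        = ((d : ℝ) - (J.card : ℝ)) / (((J.card : ℝ) + 1) * (d : ℝ)) := by
  have hJ : #J ≤ d := by simpa using card_le_univ J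
  refine ⟨?_, ?_⟩
  · rw [limeExp, sum_congr rfl fun s hs => avoid_prob_given_card (mem_Icc.1 hs).2 J]
    exact average_choose_sub_div_choose hJ
  · rw [sum_congr rfl fun s hs => prod_range_sub_div_sub_eq_choose_div (mem_Icc.1 hs).2 _]
    exact average_choose_sub_div_choose hJ

/-- for the LIME random subset S and a set J of p distinct indices,
P(∀ j ∈ J, j ∉ S) = (d−p)/((p+1)d); equivalently,
(1/d)·∑_{s=1}^d ∏_{k=0}^{p−1}(d−s−k)/(d−k) = (d−p)/((p+1)d). -/
theorem lime_avoid_prob (d : ℕ) (hd : 1 ≤ d) (J : Finset (Fin d)) :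
    limeExp d (fun S => if ∀ j ∈ J, j ∉ S then (1 : ℝ) else 0)
        = ((d : ℝ) - (J.card : ℝ)) / (((J.card : ℝ) + 1) * (d : ℝ))
      ∧ (1 / (d : ℝ)) * ∑ s ∈ Finset.Icc 1 d,
          ∏ k ∈ Finset.range J.card, (((d : ℝ) - (s : ℝ) - (k : ℝ)) / ((d : ℝ) - (k : ℝ)))
        = ((d : ℝ) - (J.card : ℝ)) / (((J.card : ℝ) + 1) * (d : ℝ)) :=
  lime_avoid_prob_general d J
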